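/- Suppose S(F,y) is periodic. For s ≥ 1 let H_s be the block Hankel matrix in Matrix (Fin s × Fin n) (Fin s) (ZMod 2) defined by H_s ((i, r), c) = (F^[i + c] y) r. Then S(F,y) has minimal polynomial of degree m if and only if the rank of H_s equals m for every s ≥ m. In that case the coefficient vector α : Fin m → ZMod 2 of the minimal polynomial X^m + ∑_{i<m} α_i X^i is the unique solution of the linear system F^[m+j] y = ∑_{i<m} α_i • F^[i+j] y for all j ≥ 0. -/
import Mathlib


/-- A nonzero polynomial `p` over `ZMod 2` is an annihilating (characteristic) polynomial
of the sequence `S(F,y) = (F^[k] y)ₖ` if for every `k ≥ 0`,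
`∑_{i=0}^{deg p} (coeff of Xⁱ in p) • F^[k+i] y = 0`. -/
def IsAnnihilating (n : ℕ) (F : (Fin n → ZMod 2) → (Fin n → ZMod 2))
    (y : Fin n → ZMod 2) (p : Polynomial (ZMod 2)) : Prop :=
  p ≠ 0 ∧ ∀ k : ℕ, ∑ i ∈ Finset.range (p.natDegree + 1), p.coeff i • F^[k + i] y = 0

/-- The block Hankel matrix `H_s` of the sequence `S(F,y)`:
`H_s ((i, r), c) = (F^[i + c] y) r`. -/
def hankel (n : ℕ) (F : (Fin n → ZMod 2) → (Fin n → ZMod 2)) (y : Fin n → ZMod 2)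
    (s : ℕ) : Matrix (Fin s × Fin n) (Fin s) (ZMod 2) :=
  fun p c => F^[(p.1 : ℕ) + (c : ℕ)] y p.2

open Polynomial Finset

namespace RCMP

variable {n : ℕ}

def shiftE : Module.End (ZMod 2) (ℕ → (Fin n → ZMod 2)) where
  toFun w := fun k => w (k+1)
  map_add' := fun _ _ => rfl
  map_smul' := fun _ _ => rfl

lemma shiftE_pow (i : ℕ) (w : ℕ → (Fin n → ZMod 2)) (k : ℕ) :
    ((shiftE (n := n))^i) w k = w (k + i) := by
  induction i generalizing w k with
  | zero => rfl
  | succ i ih =>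
    rw [pow_succ', Module.End.mul_apply]
    show ((shiftE (n := n))^i) w (k+1) = _
    rw [ih, show k + 1 + i = k + (i+1) by omega]

variable (F : (Fin n → ZMod 2) → (Fin n → ZMod 2)) (y : Fin n → ZMod 2)

def seq : ℕ → (Fin n → ZMod 2) := fun k => F^[k] y

lemma aeval_apply (p : (ZMod 2)[X]) {s : ℕ} (hs : p.natDegree < s) (k : ℕ) :
    (aeval shiftE p) (seq F y) k = ∑ i ∈ range s, p.coeff i • seq F y (k + i) := by
  rw [aeval_eq_sum_range' hs]
  rw [LinearMap.sum_apply, Finset.sum_apply]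
  refine Finset.sum_congr rfl (fun i _ => ?_)
  rw [LinearMap.smul_apply, Pi.smul_apply, shiftE_pow]

/-- The annihilator ideal of the sequence. -/
noncomputable def annI : Ideal ((ZMod 2)[X]) where
  carrier := {p | (aeval shiftE p) (seq F y) = 0}
  add_mem' := by
    intro a b ha hb
    simp only [Set.mem_setOf_eq, map_add, LinearMap.add_apply] at *
    rw [ha, hb, add_zero]
  zero_mem' := by simp
  smul_mem' := by
    intro c p hp
    simp only [Set.mem_setOf_eq, smul_eq_mul, map_mul, Module.End.mul_apply] at *
    rw [hp, map_zero]

lemma mem_annI (p : (ZMod 2)[X]) : p ∈ annI F y ↔ (aeval shiftE p) (seq F y) = 0 := Iff.rfl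

lemma ann_iff (p : (ZMod 2)[X]) :
    IsAnnihilating n F y p ↔ p ≠ 0 ∧ p ∈ annI F y := by
  unfold IsAnnihilating
  refine and_congr Iff.rfl ?_
  rw [mem_annI]
  constructor
  · intro h
    funext k
    rw [aeval_apply F y p (Nat.lt_succ_self _) k]
    exact h k
  · intro h k
    have := congrFun h k
    rwa [aeval_apply F y p (Nat.lt_succ_self _) k] at this


lemma add_eq_zero_iff' (u v : Fin n → ZMod 2) : u + v = 0 ↔ u = v := by
  constructor
  · intro h; funext r
    have h2 : ∀ x z : ZMod 2, x + z = 0 → x = z := by decide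
    exact h2 _ _ (congrFun h r)
  · rintro rfl; funext r
    have h2 : ∀ x : ZMod 2, x + x = 0 := by decide
    exact h2 _

lemma recurrence {g : (ZMod 2)[X]} (hg : g.Monic) (hgI : g ∈ annI F y) (j : ℕ) :
    seq F y (g.natDegree + j) = ∑ i ∈ range g.natDegree, g.coeff i • seq F y (i + j) := by
  have h := congrFun ((mem_annI F y g).mp hgI) j
  rw [aeval_apply F y g (Nat.lt_succ_self _) j, Finset.sum_range_succ] at h
  rw [hg.coeff_natDegree, one_smul] at h
  have h2 := (add_eq_zero_iff' _ _).mp h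
  rw [Nat.add_comm g.natDegree j, ← h2]
  exact Finset.sum_congr rfl fun i _ => by rw [Nat.add_comm i j]

lemma bootstrap {g : (ZMod 2)[X]} (hg : g.Monic) (hgI : g ∈ annI F y) {s : ℕ}
    (hs : g.natDegree ≤ s) (lam : Fin s → ZMod 2)
    (h0 : ∀ i : Fin s, ∑ c : Fin s, lam c • seq F y ((i : ℕ) + (c : ℕ)) = 0) :
    ∀ i : ℕ, ∑ c : Fin s, lam c • seq F y (i + (c : ℕ)) = 0 := by
  intro i
  induction i using Nat.strong_induction_on with
  | _ i ih =>
    rcases lt_or_ge i s with hi | hi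
    · exact h0 ⟨i, hi⟩
    · have hd : g.natDegree ≤ i := le_trans hs hi
      have step : ∀ c : Fin s, seq F y (i + (c : ℕ)) =
          ∑ t ∈ range g.natDegree, g.coeff t • seq F y (t + (i - g.natDegree + (c : ℕ))) := by
        intro c
        have : i + (c : ℕ) = g.natDegree + (i - g.natDegree + (c : ℕ)) := by omega
        rw [this, recurrence F y hg hgI]
      calc ∑ c : Fin s, lam c • seq F y (i + (c : ℕ))
          = ∑ t ∈ range g.natDegree, g.coeff t •
              ∑ c : Fin s, lam c • seq F y ((i - g.natDegree + t) + (c : ℕ)) := by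
            simp_rw [step, Finset.smul_sum]
            rw [Finset.sum_comm]
            refine Finset.sum_congr rfl fun t _ => Finset.sum_congr rfl fun c _ => ?_
            rw [smul_comm]
            have : t + (i - g.natDegree + (c : ℕ)) = (i - g.natDegree + t) + (c : ℕ) := by omega
            rw [this]
        _ = 0 := by
            refine Finset.sum_eq_zero fun t ht => ?_
            rw [ih (i - g.natDegree + t) (by have := Finset.mem_range.mp ht; omega), smul_zero]

/-- The polynomial with coefficient vector `lam`. -/
noncomputable def qpoly {s : ℕ} : (Fin s → ZMod 2) →ₗ[ZMod 2] (ZMod 2)[X] :=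
  ∑ c : Fin s, (Polynomial.monomial (c : ℕ)).comp (LinearMap.proj c)

lemma qpoly_apply {s : ℕ} (lam : Fin s → ZMod 2) :
    qpoly lam = ∑ c : Fin s, Polynomial.monomial (c : ℕ) (lam c) := by
  simp [qpoly, LinearMap.sum_apply]

lemma qpoly_coeff {s : ℕ} (lam : Fin s → ZMod 2) (j : Fin s) :
    (qpoly lam).coeff (j : ℕ) = lam j := by
  rw [qpoly_apply, finset_sum_coeff]
  rw [Finset.sum_eq_single j]
  · simp
  · intro c _ hc
    rw [coeff_monomial, if_neg (fun h => hc (Fin.ext h))]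
  · intro h; exact absurd (Finset.mem_univ j) h

lemma qpoly_natDegree_le {s : ℕ} (lam : Fin s → ZMod 2) :
    (qpoly lam).natDegree ≤ s - 1 := by
  rw [qpoly_apply]
  refine natDegree_sum_le_of_forall_le _ _ fun c _ => ?_
  exact le_trans (natDegree_monomial_le _) (by omega)

lemma qpoly_natDegree_lt {s : ℕ} (hs : 0 < s) (lam : Fin s → ZMod 2) :
    (qpoly lam).natDegree < s :=
  lt_of_le_of_lt (qpoly_natDegree_le lam) (by omega)

lemma qpoly_coeffs {s : ℕ} (p : (ZMod 2)[X]) (hp : p.natDegree < s) :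
    qpoly (fun c : Fin s => p.coeff (c : ℕ)) = p := by
  rw [qpoly_apply, ← Finset.sum_range (fun i => Polynomial.monomial i (p.coeff i))]
  exact (p.as_sum_range' s hp).symm

lemma mem_ker_iff (s : ℕ) (lam : Fin s → ZMod 2) :
    lam ∈ LinearMap.ker (hankel n F y s).mulVecLin ↔
      ∀ i : Fin s, ∑ c : Fin s, lam c • seq F y ((i : ℕ) + (c : ℕ)) = 0 := by
  rw [LinearMap.mem_ker]
  constructor
  · intro h i
    funext r
    have := congrFun h (i, r)
    simp only [Matrix.mulVecLin_apply, Matrix.mulVec, dotProduct, hankel,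
      Pi.zero_apply] at this
    rw [Finset.sum_apply]
    simpa [seq, mul_comm] using this
  · intro h
    funext p
    obtain ⟨i, r⟩ := p
    simp only [Matrix.mulVecLin_apply, Matrix.mulVec, dotProduct, hankel,
      Pi.zero_apply]
    have := congrFun (h i) r
    rw [Finset.sum_apply] at this
    simpa [seq, mul_comm] using this

lemma coeffs_mem_ker {s : ℕ} (p : (ZMod 2)[X]) (hp : p.natDegree < s) (hpI : p ∈ annI F y) :
    (fun c : Fin s => p.coeff (c : ℕ)) ∈ LinearMap.ker (hankel n F y s).mulVecLin := by
  rw [mem_ker_iff]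
  intro i
  have := congrFun ((mem_annI F y p).mp hpI) (i : ℕ)
  rw [aeval_apply F y p hp, Finset.sum_range] at this
  exact this

lemma annI_of_rel {s : ℕ} (hs : 0 < s) (lam : Fin s → ZMod 2)
    (h : ∀ i : ℕ, ∑ c : Fin s, lam c • seq F y (i + (c : ℕ)) = 0) :
    qpoly lam ∈ annI F y := by
  rw [mem_annI]
  funext k
  rw [aeval_apply F y _ (qpoly_natDegree_lt hs lam) k, Finset.sum_range]
  simp only [Pi.zero_apply]
  rw [← h k]
  exact Finset.sum_congr rfl fun c _ => by rw [qpoly_coeff]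

noncomputable def psi (g : (ZMod 2)[X]) (s : ℕ) :
    (Fin (s - g.natDegree) → ZMod 2) →ₗ[ZMod 2] (Fin s → ZMod 2) :=
  (LinearMap.pi fun c : Fin s => lcoeff (ZMod 2) (c : ℕ)).comp
    ((LinearMap.mulLeft (ZMod 2) g).comp qpoly)

lemma psi_apply (g : (ZMod 2)[X]) (s : ℕ) (h : Fin (s - g.natDegree) → ZMod 2) (c : Fin s) :
    psi g s h c = (g * qpoly h).coeff (c : ℕ) := rfl

lemma qpoly_zero_of_empty {s : ℕ} (hs : s = 0) (h : Fin s → ZMod 2) : qpoly h = 0 := by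
  rw [qpoly_apply]
  exact Finset.sum_eq_zero fun c _ => absurd c.isLt (by omega)

lemma prod_deg_lt {g : (ZMod 2)[X]} (hg : g.Monic) {s : ℕ} (hs0 : 0 < s)
    (hsd : g.natDegree ≤ s) (h : Fin (s - g.natDegree) → ZMod 2) :
    (g * qpoly h).natDegree < s := by
  by_cases hq : qpoly h = 0
  · rw [hq, mul_zero]; simpa using hs0
  · have hne : s - g.natDegree ≠ 0 := fun h0 => hq (qpoly_zero_of_empty h0 h)
    have hb := qpoly_natDegree_le h
    rw [natDegree_mul hg.ne_zero hq]
    omega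

lemma psi_inj {g : (ZMod 2)[X]} (hg : g.Monic) {s : ℕ} (hs0 : 0 < s)
    (hsd : g.natDegree ≤ s) : Function.Injective (psi g s) := by
  rw [injective_iff_map_eq_zero]
  intro h hh
  have hP : g * qpoly h = 0 := by
    apply Polynomial.ext
    intro j
    rw [coeff_zero]
    rcases lt_or_ge j s with hj | hj
    · have := congrFun hh ⟨j, hj⟩
      rwa [psi_apply] at this
    · exact coeff_eq_zero_of_natDegree_lt (lt_of_lt_of_le (prod_deg_lt hg hs0 hsd h) hj)
  have hq : qpoly h = 0 := by
    rcases mul_eq_zero.mp hP with h1 | h1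
    · exact absurd h1 hg.ne_zero
    · exact h1
  funext t
  rw [← qpoly_coeff h t, hq, coeff_zero, Pi.zero_apply]

lemma ker_eq_range {g : (ZMod 2)[X]} (hg : g.Monic) (hGen : annI F y = Ideal.span {g})
    {s : ℕ} (hs0 : 0 < s) (hsd : g.natDegree ≤ s) :
    LinearMap.ker (hankel n F y s).mulVecLin = LinearMap.range (psi g s) := by
  have hgI : g ∈ annI F y := by
    rw [hGen]; exact Ideal.mem_span_singleton.mpr dvd_rfl
  ext lam
  constructor
  · intro hl
    have hrel := bootstrap F y hg hgI hsd lam ((mem_ker_iff F y s lam).mp hl)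
    have hq : qpoly lam ∈ annI F y := annI_of_rel F y hs0 lam hrel
    rw [hGen, Ideal.mem_span_singleton] at hq
    obtain ⟨u, hu⟩ := hq
    refine ⟨fun t => u.coeff (t : ℕ), ?_⟩
    funext c
    rw [psi_apply]
    by_cases hu0 : u = 0
    · have hz : (fun t : Fin (s - g.natDegree) => u.coeff (t : ℕ)) = 0 := by
        funext t; rw [hu0, coeff_zero]; rfl
      rw [hz, map_zero, mul_zero, coeff_zero, ← qpoly_coeff lam c, hu, hu0, mul_zero,
        coeff_zero]
    · have hql : (qpoly lam).natDegree < s := qpoly_natDegree_lt hs0 lam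
      rw [hu, natDegree_mul hg.ne_zero hu0] at hql
      rw [qpoly_coeffs u (by omega), ← hu, qpoly_coeff]
  · rintro ⟨h, rfl⟩
    have hmem : g * qpoly h ∈ annI F y := by
      rw [hGen]; exact Ideal.mem_span_singleton.mpr ⟨qpoly h, rfl⟩
    have hdeg := prod_deg_lt hg hs0 hsd h
    exact coeffs_mem_ker F y _ hdeg hmem

lemma rank_hankel {g : (ZMod 2)[X]} (hg : g.Monic) (hGen : annI F y = Ideal.span {g})
    {s : ℕ} (hsd : g.natDegree ≤ s) :
    (hankel n F y s).rank = g.natDegree := by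
  rcases Nat.eq_zero_or_pos s with rfl | hs0
  · have h1 : (hankel n F y 0).rank ≤ 0 :=
      le_trans (Matrix.rank_le_card_width _) (by simp)
    omega
  · have h1 := LinearMap.finrank_range_add_finrank_ker (hankel n F y s).mulVecLin
    rw [Module.finrank_fin_fun] at h1
    have h2 : Module.finrank (ZMod 2) (LinearMap.ker (hankel n F y s).mulVecLin)
        = s - g.natDegree := by
      rw [ker_eq_range F y hg hGen hs0 hsd,
        LinearMap.finrank_range_of_inj (psi_inj hg hs0 hsd), Module.finrank_fin_fun]
    have h3 : (hankel n F y s).rank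
        = Module.finrank (ZMod 2) (LinearMap.range (hankel n F y s).mulVecLin) := rfl
    omega

lemma eq_gen {g μ : (ZMod 2)[X]} (hg : g.Monic) (hGen : annI F y = Ideal.span {g})
    (hμm : μ.Monic) (hμI : μ ∈ annI F y) (hdeg : μ.natDegree = g.natDegree) : μ = g := by
  have hμ0 : μ ≠ 0 := hμm.ne_zero
  have hdvd : g ∣ μ := Ideal.mem_span_singleton.mp (hGen ▸ hμI)
  obtain ⟨u, hu⟩ := hdvd
  have hu0 : u ≠ 0 := fun h => hμ0 (by rw [hu, h, mul_zero])
  rw [hu, natDegree_mul hg.ne_zero hu0] at hdeg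
  have hdu : u.natDegree = 0 := by omega
  have hlc : μ.leadingCoeff = g.leadingCoeff * u.leadingCoeff := by
    rw [hu, leadingCoeff_mul]
  rw [hμm.leadingCoeff, hg.leadingCoeff, one_mul] at hlc
  have : u = 1 := by
    rw [Polynomial.eq_C_of_natDegree_eq_zero hdu]
    rw [Polynomial.eq_C_of_natDegree_eq_zero hdu, leadingCoeff_C] at hlc
    rw [← hlc, map_one]
  rw [hu, this, mul_one]

lemma rec_formula {μ : (ZMod 2)[X]} (hμm : μ.Monic) (hμI : μ ∈ annI F y) {m : ℕ}
    (hdeg : μ.natDegree = m) (j : ℕ) :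
    F^[m + j] y = ∑ i : Fin m, μ.coeff (i : ℕ) • F^[(i : ℕ) + j] y := by
  have h := recurrence F y hμm hμI j
  rw [hdeg, Finset.sum_range] at h
  exact h

end RCMP


open RCMP

/-- Suppose `S(F,y)` is periodic. Then `S(F,y)` has minimal polynomial of
degree `m` iff the rank of the block Hankel matrix `H_s` equals `m` for every `s ≥ m`.
In that case the coefficient vector `α` of the minimal polynomial `X^m + ∑_{i<m} αᵢ Xⁱ`
is the unique solution of the linear system `F^[m+j] y = ∑_{i<m} αᵢ • F^[i+j] y` (`j ≥ 0`). -/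
theorem rank_criterion_minimal_polynomial (n : ℕ) (hn : 0 < n)
    (F : (Fin n → ZMod 2) → (Fin n → ZMod 2)) (y : Fin n → ZMod 2)
    (N : ℕ) (hN : 1 ≤ N) (hper : ∀ k : ℕ, F^[k + N] y = F^[k] y) (m : ℕ) :
    ((∃ μ : Polynomial (ZMod 2), μ.Monic ∧ IsAnnihilating n F y μ ∧
        (∀ p : Polynomial (ZMod 2), IsAnnihilating n F y p → μ.natDegree ≤ p.natDegree) ∧
        μ.natDegree = m) ↔
      (∀ s : ℕ, m ≤ s → (hankel n F y s).rank = m)) ∧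
    (∀ μ : Polynomial (ZMod 2), μ.Monic → IsAnnihilating n F y μ →
      (∀ p : Polynomial (ZMod 2), IsAnnihilating n F y p → μ.natDegree ≤ p.natDegree) →
      μ.natDegree = m →
      (∀ j : ℕ, F^[m + j] y = ∑ i : Fin m, μ.coeff i • F^[(i : ℕ) + j] y) ∧
      (∀ α : Fin m → ZMod 2,
        (∀ j : ℕ, F^[m + j] y = ∑ i : Fin m, α i • F^[(i : ℕ) + j] y) →
        α = fun i : Fin m => μ.coeff (i : ℕ))) := by
  -- the annihilator ideal is nonzero: X^N - 1 belongs to it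
  have hXN : (X ^ N - 1 : (ZMod 2)[X]) ∈ annI F y := by
    rw [mem_annI]
    funext k
    rw [map_sub, map_one, aeval_X_pow]
    have : ((shiftE ^ N - 1) (seq F y)) k = seq F y (k + N) - seq F y k := by
      rw [LinearMap.sub_apply, Pi.sub_apply, shiftE_pow]
      rfl
    rw [LinearMap.sub_apply, Pi.sub_apply]
    have h2 : ((shiftE ^ N) (seq F y)) k = seq F y (k + N) := shiftE_pow N _ k
    rw [h2]
    have h3 : seq F y (k + N) = seq F y k := hper k
    rw [h3]
    simp [Module.End.one_apply]
  have hXN0 : (X ^ N - 1 : (ZMod 2)[X]) ≠ 0 := by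
    have := Polynomial.X_pow_sub_C_ne_zero (R := ZMod 2) (Nat.lt_of_lt_of_le Nat.zero_lt_one hN) 1
    rwa [map_one] at this
  -- the generator of the annihilator ideal
  set g : (ZMod 2)[X] := Submodule.IsPrincipal.generator (annI F y) with hgdef
  have hGen : annI F y = Ideal.span {g} := (Ideal.span_singleton_generator _).symm
  have hg0 : g ≠ 0 := by
    intro h
    rw [h] at hGen
    rw [Ideal.span_singleton_eq_bot.mpr rfl] at hGen
    rw [hGen] at hXN
    exact hXN0 (Submodule.mem_bot _ |>.mp hXN)
  have hgmonic : g.Monic := by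
    have h1 : g.leadingCoeff ≠ 0 := leadingCoeff_ne_zero.mpr hg0
    have h2 : ∀ x : ZMod 2, x ≠ 0 → x = 1 := by decide
    exact h2 _ h1
  have hgI : g ∈ annI F y := by rw [hGen]; exact Ideal.mem_span_singleton.mpr dvd_rfl
  have hgAnn : IsAnnihilating n F y g := (ann_iff F y g).mpr ⟨hg0, hgI⟩
  have hgmin : ∀ p : (ZMod 2)[X], IsAnnihilating n F y p → g.natDegree ≤ p.natDegree := by
    intro p hp
    obtain ⟨hp0, hpI⟩ := (ann_iff F y p).mp hp
    rw [hGen, Ideal.mem_span_singleton] at hpI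
    exact natDegree_le_of_dvd hpI hp0
  -- any minimal monic annihilating polynomial equals g
  have huniq : ∀ μ : (ZMod 2)[X], μ.Monic → IsAnnihilating n F y μ →
      (∀ p : (ZMod 2)[X], IsAnnihilating n F y p → μ.natDegree ≤ p.natDegree) → μ = g := by
    intro μ hμm hμa hμmin
    obtain ⟨hμ0, hμI⟩ := (ann_iff F y μ).mp hμa
    exact eq_gen F y hgmonic hGen hμm hμI
      (le_antisymm (hμmin g hgAnn) (hgmin μ hμa))
  constructor
  · constructor
    · rintro ⟨μ, hμm, hμa, hμmin, hμdeg⟩ s hs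
      have hμg : μ = g := huniq μ hμm hμa hμmin
      have hmd : g.natDegree = m := by rw [← hμg, hμdeg]
      rw [← hmd] at hs
      rw [rank_hankel F y hgmonic hGen hs, hmd]
    · intro hR
      have hmd : m = g.natDegree := by
        have h1 := rank_hankel F y hgmonic hGen (le_max_right m g.natDegree)
        have h2 := hR (max m g.natDegree) (le_max_left _ _)
        rw [h1] at h2
        exact h2.symm
      exact ⟨g, hgmonic, hgAnn, hgmin, hmd.symm⟩
  · intro μ hμm hμa hμmin hμdeg
    have hμg : μ = g := huniq μ hμm hμa hμmin
    have hμI : μ ∈ annI F y := hμg ▸ hgI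
    refine ⟨rec_formula F y hμm hμI hμdeg, ?_⟩
    intro α hα
    rcases Nat.eq_zero_or_pos m with rfl | hm
    · funext i; exact absurd i.isLt (Nat.not_lt_zero _)
    · -- build the candidate polynomial from α
      set q : (ZMod 2)[X] := X ^ m + qpoly α with hqdef
      have hqd : (qpoly α).natDegree < m := qpoly_natDegree_lt hm α
      have hqdeg : q.natDegree = m := by
        rw [hqdef, natDegree_add_eq_left_of_natDegree_lt
          (by rwa [natDegree_X_pow] : (qpoly α).natDegree < (X ^ m : (ZMod 2)[X]).natDegree),
          natDegree_X_pow]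
      have hqmonic : q.Monic := by
        have hdlt : (qpoly α).degree < (m : WithBot ℕ) :=
          lt_of_le_of_lt degree_le_natDegree (by exact_mod_cast hqd)
        exact Polynomial.monic_X_pow_add hdlt
      have hqI : q ∈ annI F y := by
        rw [mem_annI]
        funext k
        rw [hqdef, map_add, aeval_X_pow, LinearMap.add_apply, Pi.add_apply, shiftE_pow,
          aeval_apply F y _ (qpoly_natDegree_lt hm α) k, Finset.sum_range]
        have hs1 : ∑ i : Fin m, (qpoly α).coeff (i : ℕ) • seq F y (k + (i : ℕ))
            = ∑ i : Fin m, α i • seq F y (k + (i : ℕ)) :=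
          Finset.sum_congr rfl fun i _ => by rw [qpoly_coeff]
        rw [hs1]
        have hsk : seq F y (k + m) = ∑ i : Fin m, α i • seq F y (k + (i : ℕ)) := by
          have := hα k
          rw [Nat.add_comm m k] at this
          rw [show (seq F y (k + m)) = F^[k + m] y from rfl]
          rw [this]
          refine Finset.sum_congr rfl fun i _ => ?_
          rw [Nat.add_comm (i : ℕ) k]
          rfl
        rw [hsk]
        simp only [Pi.zero_apply]
        exact (RCMP.add_eq_zero_iff' _ _).mpr rfl
      have hqg : q = g := eq_gen F y hgmonic hGen hqmonic hqI (by rw [hqdeg, ← hμg]; exact hμdeg.symm)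
      funext i
      have h1 : q.coeff (i : ℕ) = α i := by
        rw [hqdef, coeff_add, coeff_X_pow, if_neg (Nat.ne_of_lt i.isLt), zero_add,
          qpoly_coeff]
      rw [← h1, hqg, ← hμg]
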